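/- arXiv:2103.00631 — 2 statements merged into one kernel-verified Lean document; each statement's English description precedes it below -/
import Mathlib

section
/- Let h be a symmetric kernel of order k with E[h²] < ∞ applied to i.i.d. Z_1,...,Z_N (k ≤ N). For 1 ≤ c ≤ k define ζ_c = Cov(h(Z_1,...,Z_c,Z_{c+1},...,Z_k), h(Z_1,...,Z_c,Z'_{c+1},...,Z'_k)), where Z' variables are independent copies. Then the variance of the complete U-statistic U = C(N,k)^{-1} Σ_{|s|=k} h(Z_s) equals Var(U) = Σ_{c=1}^{k} [C(k,c)·C(N−k,k−c)/C(N,k)] · ζ_c. -/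
/-!
Expanding the variance of the sum gives `Var U = C(N,k)⁻² ∑_{A,B} Cov(h(Z_A), h(Z_B))`. By the
symmetry of `h` and the exchangeability of an i.i.d. sequence, `Cov(h(Z_A), h(Z_B))` only depends
on `c = |A ∩ B|` and equals `ζ_c`: enumerate `A` and `B` so that they agree on their first `c`
entries; the data along `A ∪ B` then has the same joint law as along the canonical pattern
`{0,…,k-1} ∪ {k+c,…,2k-1}`. For fixed `A`, exactly `C(k,c)·C(N-k,k-c)` of the sets `B` meet `A`
in `c` points, and `ζ_0 = 0` by independence.
-/

open MeasureTheory ProbabilityTheory Filter Topology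

/-- Covariance of two real random variables. -/
noncomputable def cov {Ω : Type*} [MeasurableSpace Ω] (P : Measure Ω) (X Y : Ω → ℝ) : ℝ :=
  ∫ ω, X ω * Y ω ∂P - (∫ ω, X ω ∂P) * (∫ ω, Y ω ∂P)

/-- Evaluation of a symmetric order-`k` kernel `h` on the data indexed by a size-`k`
subset `A` of `{0,…,N-1}` (the order of the arguments is irrelevant by symmetry). -/
noncomputable def kernelOn {Ω : Type*} {N k : ℕ} (h : (Fin k → ℝ) → ℝ)
    (Z : ℕ → Ω → ℝ) (A : Finset (Fin N)) (ω : Ω) : ℝ :=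
  if hA : A.card = k then h (fun j => Z (A.orderEmbOfFin hA j : ℕ) ω) else 0

open Finset Function
open scoped ENNReal

section Combinatorics

variable {α : Type*} [DecidableEq α]

theorem card_filter_powersetCard_card_inter {s A : Finset α} (hA : A ⊆ s) {n c : ℕ}
    (hc : c ≤ n) :
    #{B ∈ s.powersetCard n | #(A ∩ B) = c} = (#A).choose c * (#s - #A).choose (n - c) := by
  rw [← card_powersetCard, ← card_sdiff_of_subset hA, ← card_powersetCard, ← card_product]
  refine card_nbij' (fun B => (A ∩ B, B \ A)) (fun p => p.1 ∪ p.2) ?_ ?_ ?_ ?_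
  · intro B hB
    simp only [coe_filter, mem_powersetCard, Set.mem_ofPred_eq] at hB
    simp only [coe_product, Set.mem_prod, mem_coe, mem_powersetCard]
    refine ⟨⟨inter_subset_left, hB.2⟩, sdiff_subset_sdiff hB.1.1 le_rfl, ?_⟩
    have := card_sdiff_add_card_inter B A
    rw [inter_comm] at this; omega
  · rintro ⟨P, Q⟩ hPQ
    simp only [coe_product, Set.mem_prod, mem_coe, mem_powersetCard] at hPQ
    obtain ⟨⟨hPA, hP⟩, hQ, hQc⟩ := hPQ
    have hdisj : Disjoint P Q :=
      disjoint_of_subset_left hPA (disjoint_of_subset_right hQ disjoint_sdiff)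
    have hAQ : A ∩ Q = ∅ := by grind
    simp only [coe_filter, mem_powersetCard, Set.mem_ofPred_eq]
    refine ⟨⟨union_subset (hPA.trans hA) (hQ.trans sdiff_subset), ?_⟩, ?_⟩
    · rw [card_union_of_disjoint hdisj]; omega
    · rw [inter_union_distrib_left, inter_eq_right.2 hPA, hAQ, union_empty, hP]
  · intro B _
    simpa [inter_comm A B] using sup_inf_sdiff B A
  · rintro ⟨P, Q⟩ hPQ
    simp only [coe_product, Set.mem_prod, mem_coe, mem_powersetCard] at hPQ
    simp only [Prod.mk.injEq]
    constructor <;> ext x <;> simp <;> grind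

theorem sum_powersetCard_card_inter {M : Type*} [AddCommMonoid M] {s A : Finset α}
    (hA : A ⊆ s) {n : ℕ} (hAn : #A = n) (f : ℕ → M) :
    ∑ B ∈ s.powersetCard n, f #(A ∩ B) =
      ∑ c ∈ range (n + 1), (n.choose c * (#s - n).choose (n - c)) • f c := by
  have hmaps : ∀ B ∈ s.powersetCard n, #(A ∩ B) ∈ range (n + 1) := fun B _ =>
    mem_range_succ_iff.2 (hAn ▸ card_le_card inter_subset_left)
  rw [← sum_fiberwise_of_maps_to hmaps]
  refine sum_congr rfl fun c hc => ?_
  rw [sum_congr rfl fun B hB => congrArg f (mem_filter.1 hB).2, sum_const,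
    card_filter_powersetCard_card_inter hA (mem_range_succ_iff.1 hc), hAn]

theorem exists_enum_agreeing_on_inter [Nonempty α] {k : ℕ} {A B : Finset α} (hA : #A = k)
    (hB : #B = k) :
    ∃ a b : Fin k → α, Injective a ∧ Injective b ∧ (∀ j, a j ∈ A) ∧ (∀ j, b j ∈ B) ∧
      (∀ j : Fin k, (j : ℕ) < #(A ∩ B) → b j = a j) ∧
      ∀ j : Fin k, #(A ∩ B) ≤ j → b j ∉ A := by
  set c := #(A ∩ B)
  let e := (A ∩ B).equivFin.symm
  let f : Fin k → α := fun j => if hj : (j : ℕ) < c then e ⟨j, hj⟩ else Classical.arbitrary α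
  let head : Finset (Fin k) := {j | (j : ℕ) < c}
  have hf_mem : ∀ j ∈ head, f j ∈ A ∩ B := fun j hj => by
    simp only [head, mem_filter, mem_univ, true_and] at hj
    simp only [f, dif_pos hj, coe_mem]
  have hf_inj : Set.InjOn f head := fun i hi j hj hij => by
    simp only [head, coe_filter, mem_univ, true_and, Set.mem_ofPred_eq] at hi hj
    simp only [f, dif_pos hi, dif_pos hj, Subtype.val_inj, e.injective.eq_iff,
      Fin.mk.injEq] at hij
    exact Fin.ext hij
  obtain ⟨a, ha⟩ := exists_equiv_extend_of_card_eq (t := A) (by simp [hA])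
    (fun x hx => by
      obtain ⟨j, hj, rfl⟩ := mem_image.1 hx
      exact mem_of_mem_inter_left (hf_mem j hj)) hf_inj
  obtain ⟨b, hb⟩ := exists_equiv_extend_of_card_eq (t := B) (f := fun j => (a j : α))
    (s := head) (by simp [hB])
    (fun x hx => by
      obtain ⟨j, hj, rfl⟩ := mem_image.1 hx
      exact ha j hj ▸ mem_of_mem_inter_right (hf_mem j hj))
    (Subtype.val_injective.comp a.injective).injOn
  have hhead : ∀ j : Fin k, (j : ℕ) < c → b j = (a j : α) :=
    fun j hj => hb j (by simpa [head])
  refine ⟨fun j => a j, fun j => b j, Subtype.val_injective.comp a.injective,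
    Subtype.val_injective.comp b.injective, fun j => (a j).2, fun j => (b j).2, hhead, ?_⟩
  intro j hj hbA
  obtain ⟨i, hi⟩ := e.surjective ⟨b j, mem_inter.2 ⟨hbA, (b j).2⟩⟩
  have hk : (i : ℕ) < k := i.2.trans_le (hA ▸ card_le_card inter_subset_left)
  have hbi : (b ⟨i, hk⟩ : α) = b j := by
    have hic : (i : ℕ) < c := i.2
    rw [hhead _ hic, ha _ (by simp [head, hic]), ← congrArg Subtype.val hi]
    simp [f, hic]
  have := congrArg Fin.val (b.injective (Subtype.val_injective hbi))
  simp only at this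
  omega

end Combinatorics

theorem comp_eq_comp_of_symmetric {α β γ : Type*} {k : ℕ} {h : (Fin k → β) → γ}
    (hsymm : ∀ (σ : Equiv.Perm (Fin k)) (x : Fin k → β), h (x ∘ σ) = h x)
    {e a : Fin k → α} (he : Injective e) (ha : Injective a) (hae : ∀ j, a j ∈ Set.range e)
    (x : α → β) : h (x ∘ a) = h (x ∘ e) := by
  let σ : Fin k → Fin k := fun j => (Equiv.ofInjective e he).symm ⟨a j, hae j⟩
  have hσ : ∀ j, e (σ j) = a j := fun j => Equiv.apply_ofInjective_symm he _
  have hσ_inj : Injective σ := fun i j hij => ha (by rw [← hσ i, ← hσ j, hij])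
  rw [← hsymm (Equiv.ofBijective σ (Finite.injective_iff_bijective.1 hσ_inj)) (x ∘ e)]
  congr 1
  funext j
  simp [hσ]

namespace ProbabilityTheory

variable {Ω ι 𝓧 : Type*} [MeasurableSpace Ω] [MeasurableSpace 𝓧] {P : Measure Ω}
  {Z : ι → Ω → 𝓧}

theorem iIndepFun.identDistrib_reindex [IsProbabilityMeasure P]
    (hmeas : ∀ i, Measurable (Z i)) (hiid : iIndepFun Z P)
    (hident : ∀ i j, IdentDistrib (Z i) (Z j) P P) {κ : Type*} [Fintype κ] {u v : κ → ι}
    (hu : Injective u) (hv : Injective v) :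
    IdentDistrib (fun ω l => Z (u l) ω) (fun ω l => Z (v l) ω) P P where
  aemeasurable_fst := by fun_prop
  aemeasurable_snd := by fun_prop
  map_eq := by
    rw [(iIndepFun_iff_map_fun_eq_pi_map fun l => (hmeas _).aemeasurable).1 (hiid.precomp hu),
      (iIndepFun_iff_map_fun_eq_pi_map fun l => (hmeas _).aemeasurable).1 (hiid.precomp hv)]
    congr 1
    funext l
    exact (hident _ _).map_eq

theorem iIndepFun.indepFun_reindex_of_disjoint (hmeas : ∀ i, Measurable (Z i))
    (hiid : iIndepFun Z P) {κ₁ κ₂ : Type*} [Fintype κ₁] [Fintype κ₂] {u : κ₁ → ι} {v : κ₂ → ι}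
    (huv : ∀ l₁ l₂, u l₁ ≠ v l₂) :
    IndepFun (fun ω l => Z (u l) ω) (fun ω l => Z (v l) ω) P := by
  classical
  have hdisj : Disjoint (univ.image u) (univ.image v) := by
    simp only [disjoint_left, mem_image, mem_univ, true_and, not_exists]
    rintro _ ⟨l₁, rfl⟩ l₂
    exact (huv l₁ l₂).symm
  exact (hiid.indepFun_finset _ _ hdisj hmeas).comp
    (φ := fun y l => y ⟨u l, by simp⟩) (ψ := fun y l => y ⟨v l, by simp⟩)
    (measurable_pi_lambda _ fun _ => measurable_pi_apply _)
    (measurable_pi_lambda _ fun _ => measurable_pi_apply _)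

theorem IdentDistrib.cov_comp_eq {Ω' E : Type*} [MeasurableSpace Ω']
    [MeasurableSpace E] {μ : Measure Ω} {ν : Measure Ω'} {V : Ω → E} {W : Ω' → E}
    (hVW : IdentDistrib V W μ ν) {F G : E → ℝ} (hF : Measurable F) (hG : Measurable G) :
    cov μ (F ∘ V) (G ∘ V) = cov ν (F ∘ W) (G ∘ W) := by
  unfold cov
  rw [(hVW.comp hF).integral_eq, (hVW.comp hG).integral_eq]
  congr 1
  exact (hVW.comp (hF.mul hG)).integral_eq

theorem IndepFun.cov_eq_zero {X Y : Ω → ℝ} (hXY : IndepFun X Y P)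
    (hX : AEStronglyMeasurable X P) (hY : AEStronglyMeasurable Y P) : cov P X Y = 0 :=
  sub_eq_zero.2 (hXY.integral_fun_mul_eq_mul_integral hX hY)

end ProbabilityTheory

theorem kernelOn_eq_of_injective {Ω : Type*} {N k : ℕ} {h : (Fin k → ℝ) → ℝ}
    (hsymm : ∀ (σ : Equiv.Perm (Fin k)) (x : Fin k → ℝ), h (x ∘ σ) = h x)
    (Z : ℕ → Ω → ℝ) {A : Finset (Fin N)} (hA : #A = k) {a : Fin k → ℕ} (ha : Injective a)
    (haA : ∀ j, a j ∈ A.map Fin.valEmbedding) (ω : Ω) :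
    kernelOn h Z A ω = h (fun j => Z (a j) ω) := by
  rw [kernelOn, dif_pos hA]
  refine (comp_eq_comp_of_symmetric hsymm (e := fun j => (A.orderEmbOfFin hA j : ℕ))
    (Fin.val_injective.comp (A.orderEmbOfFin hA).injective) ha (fun j => ?_) (Z · ω)).symm
  obtain ⟨i, hi, hia⟩ := mem_map.1 (haA j)
  obtain ⟨l, rfl⟩ : i ∈ Set.range (A.orderEmbOfFin hA) := by rwa [range_orderEmbOfFin]
  exact ⟨l, hia⟩

/-- `ζ_c`, with the independent copies `Z'_j` realised as `Z_{k+j}`. -/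
noncomputable def hoeffdingZeta {Ω : Type*} [MeasurableSpace Ω] (P : Measure Ω) {k : ℕ}
    (h : (Fin k → ℝ) → ℝ) (Z : ℕ → Ω → ℝ) (c : ℕ) : ℝ :=
  cov P (fun ω => h fun j => Z j ω)
    (fun ω => h fun j => if (j : ℕ) < c then Z j ω else Z (k + j) ω)

section UStatistic

variable {Ω : Type*} [MeasurableSpace Ω] {P : Measure Ω} {N k : ℕ}
  {h : (Fin k → ℝ) → ℝ} {Z : ℕ → Ω → ℝ}

theorem memLp_kernelOn [IsProbabilityMeasure P] (hhmeas : Measurable h)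
    (hmeas : ∀ i, Measurable (Z i)) (hiid : iIndepFun Z P)
    (hident : ∀ i j, IdentDistrib (Z i) (Z j) P P) {p : ℝ≥0∞}
    (hp : MemLp (fun ω => h fun j => Z j ω) p P) {A : Finset (Fin N)} (hA : #A = k) :
    MemLp (kernelOn h Z A) p P := by
  have hid := (iIndepFun.identDistrib_reindex hmeas hiid hident Fin.val_injective
    (Fin.val_injective.comp (A.orderEmbOfFin hA).injective)).comp hhmeas
  convert hid.memLp_snd hp using 1
  funext ω
  simp [kernelOn, hA]

theorem cov_kernelOn_kernelOn [IsProbabilityMeasure P] (hhmeas : Measurable h)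
    (hsymm : ∀ (σ : Equiv.Perm (Fin k)) (x : Fin k → ℝ), h (x ∘ σ) = h x)
    (hmeas : ∀ i, Measurable (Z i)) (hiid : iIndepFun Z P)
    (hident : ∀ i j, IdentDistrib (Z i) (Z j) P P)
    {A B : Finset (Fin N)} (hA : #A = k) (hB : #B = k) :
    cov P (kernelOn h Z A) (kernelOn h Z B) = hoeffdingZeta P h Z #(A ∩ B) := by
  set c := #(A ∩ B)
  have hc : #(A.map Fin.valEmbedding ∩ B.map Fin.valEmbedding) = c := by
    rw [← map_inter, card_map]
  obtain ⟨a, b, ha, hb, haA, hbB, hhead, htail⟩ :=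
    exists_enum_agreeing_on_inter (k := k) (A := A.map Fin.valEmbedding)
      (B := B.map Fin.valEmbedding) (by rwa [card_map]) (by rwa [card_map])
  rw [hc] at hhead htail
  -- Index `A ∪ B` by `Fin k ⊕ {j // c ≤ j}`: `u` sends the left summand along `a` onto `A` and
  -- the right one along `b` onto `B \ A`, while `u₀` is the pattern `{0,…,k-1} ∪ {k+c,…,2k-1}`.
  let u : Fin k ⊕ {j : Fin k // c ≤ j} → ℕ := Sum.elim a fun j => b j
  let u₀ : Fin k ⊕ {j : Fin k // c ≤ j} → ℕ := Sum.elim (fun j => j) fun j => k + j.1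
  have hu : Injective u := ha.sumElim (hb.comp Subtype.val_injective) fun i j hij =>
    htail j.1 j.2 (hij ▸ haA i)
  have hu₀ : Injective u₀ := Fin.val_injective.sumElim
    ((add_right_injective k).comp (Fin.val_injective.comp Subtype.val_injective))
    fun i j => (i.2.trans_le (Nat.le_add_right k _)).ne
  let F : (Fin k ⊕ {j : Fin k // c ≤ j} → ℝ) → ℝ := fun y => h fun j => y (.inl j)
  let G : (Fin k ⊕ {j : Fin k // c ≤ j} → ℝ) → ℝ := fun y =>
    h fun j => if hj : c ≤ j then y (.inr ⟨j, hj⟩) else y (.inl j)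
  have hF : Measurable F := hhmeas.comp (measurable_pi_lambda _ fun _ => measurable_pi_apply _)
  have hG : Measurable G := hhmeas.comp <| measurable_pi_lambda _ fun j => by
    split_ifs <;> exact measurable_pi_apply _
  calc cov P (kernelOn h Z A) (kernelOn h Z B)
      = cov P (F ∘ fun ω l => Z (u l) ω) (G ∘ fun ω l => Z (u l) ω) := by
        congr 1 <;> funext ω
        · exact kernelOn_eq_of_injective hsymm Z hA ha haA ω
        · rw [kernelOn_eq_of_injective hsymm Z hB hb hbB ω]
          congr 1
          funext j
          by_cases hj : c ≤ j
          · simp [u, hj]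
          · simp [u, hj, hhead j (not_le.1 hj)]
    _ = cov P (F ∘ fun ω l => Z (u₀ l) ω) (G ∘ fun ω l => Z (u₀ l) ω) :=
        (iIndepFun.identDistrib_reindex hmeas hiid hident hu hu₀).cov_comp_eq hF hG
    _ = _ := by
        congr 1
        funext ω
        simp only [comp_apply, G, u₀]
        congr 1
        funext j
        by_cases hj : c ≤ j
        · simp [hj]
        · simp [hj, not_le.1 hj]

theorem hoeffdingZeta_zero (hhmeas : Measurable h) (hmeas : ∀ i, Measurable (Z i))
    (hiid : iIndepFun Z P) : hoeffdingZeta P h Z 0 = 0 := by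
  simp only [hoeffdingZeta, Nat.not_lt_zero, if_false]
  refine IndepFun.cov_eq_zero ((iIndepFun.indepFun_reindex_of_disjoint hmeas hiid
    (u := fun j : Fin k => (j : ℕ)) (v := fun j : Fin k => k + j)
    fun i j => (i.2.trans_le (Nat.le_add_right k _)).ne).comp hhmeas hhmeas) ?_ ?_
  all_goals exact (hhmeas.comp (measurable_pi_lambda _ fun _ => hmeas _)).aestronglyMeasurable

theorem variance_sum_kernelOn [IsProbabilityMeasure P] (hhmeas : Measurable h)
    (hsymm : ∀ (σ : Equiv.Perm (Fin k)) (x : Fin k → ℝ), h (x ∘ σ) = h x)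
    (hmeas : ∀ i, Measurable (Z i)) (hiid : iIndepFun Z P)
    (hident : ∀ i j, IdentDistrib (Z i) (Z j) P P)
    (hL2 : MemLp (fun ω => h fun j => Z j ω) 2 P) :
    variance (fun ω => ∑ A ∈ powersetCard k (univ : Finset (Fin N)), kernelOn h Z A ω) P =
      N.choose k * ∑ c ∈ range (k + 1),
        (k.choose c * (N - k).choose (k - c) : ℝ) * hoeffdingZeta P h Z c := by
  classical
  have hcard : ∀ A ∈ powersetCard k (univ : Finset (Fin N)), #A = k :=
    fun A hA => (mem_powersetCard.1 hA).2
  have hL2A := fun A hA => memLp_kernelOn hhmeas hmeas hiid hident hL2 (hcard A hA)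
  calc variance _ P
      = ∑ A ∈ powersetCard k univ, ∑ B ∈ powersetCard k univ,
          hoeffdingZeta P h Z #(A ∩ B) := by
        rw [variance_fun_sum' hL2A]
        refine sum_congr rfl fun A hA => sum_congr rfl fun B hB => ?_
        rw [covariance_eq_sub (hL2A A hA) (hL2A B hB),
          ← cov_kernelOn_kernelOn hhmeas hsymm hmeas hiid hident (hcard A hA) (hcard B hB)]
        rfl
    _ = _ := by
        rw [sum_congr rfl fun A hA =>
            sum_powersetCard_card_inter (subset_univ A) (hcard A hA) (hoeffdingZeta P h Z),
          sum_const, card_powersetCard, card_univ, Fintype.card_fin]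
        simp only [nsmul_eq_mul, Nat.cast_mul]

end UStatistic

theorem stmt_4_general {Ω : Type*} [MeasurableSpace Ω] (P : Measure Ω) [IsProbabilityMeasure P]
    (N k : ℕ)
    (h : (Fin k → ℝ) → ℝ) (hhmeas : Measurable h)
    (hsymm : ∀ (σ : Equiv.Perm (Fin k)) (x : Fin k → ℝ), h (x ∘ σ) = h x)
    (Z : ℕ → Ω → ℝ)
    (hmeas : ∀ i, Measurable (Z i))
    (hiid : iIndepFun Z P)
    (hident : ∀ i j, IdentDistrib (Z i) (Z j) P P)
    (hL2 : MemLp (fun ω => h (fun j => Z (j : ℕ) ω)) 2 P)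
    (ζ : ℕ → ℝ)
    (hζ : ∀ c, ζ c = cov P (fun ω => h (fun j => Z (j : ℕ) ω))
      (fun ω => h (fun j => if (j : ℕ) < c then Z (j : ℕ) ω else Z (k + (j : ℕ)) ω))) :
    variance (fun ω =>
        (∑ A ∈ Finset.powersetCard k (Finset.univ : Finset (Fin N)),
          kernelOn h Z A ω) / (N.choose k : ℝ)) P =
      ∑ c ∈ Finset.Icc 1 k,
        ((k.choose c : ℝ) * ((N - k).choose (k - c) : ℝ) / (N.choose k : ℝ)) * ζ c := by
  obtain rfl : ζ = hoeffdingZeta P h Z := funext hζ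
  have hrange : range (k + 1) = insert 0 (Icc 1 k) := by
    ext c
    simp only [mem_range, mem_insert, mem_Icc]
    omega
  simp_rw [div_eq_inv_mul]
  rw [variance_const_mul, variance_sum_kernelOn hhmeas hsymm hmeas hiid hident hL2, hrange,
    sum_insert (by simp), hoeffdingZeta_zero hhmeas hmeas hiid, mul_zero, zero_add, mul_sum,
    mul_sum]
  refine sum_congr rfl fun c _ => ?_
  by_cases hC : (N.choose k : ℝ) = 0
  · simp [hC]
  · field_simp

/-- Hoeffding's variance formula: for a symmetric order-`k` kernel with
finite second moment applied to i.i.d. data, with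
`ζ_c = Cov(h(Z_0,…,Z_{k-1}), h(Z_0,…,Z_{c-1}, Z'_c,…,Z'_{k-1}))` (independent copies `Z'`
realized as further terms of the i.i.d. sequence), the complete U-statistic
`U = C(N,k)⁻¹ ∑_{|A|=k} h(Z_A)` satisfies
`Var(U) = ∑_{c=1}^k [C(k,c)·C(N−k,k−c)/C(N,k)]·ζ_c`. -/
theorem stmt_4 {Ω : Type*} [MeasurableSpace Ω] (P : Measure Ω) [IsProbabilityMeasure P]
    (N k : ℕ) (hk : 1 ≤ k) (hkN : k ≤ N)
    (h : (Fin k → ℝ) → ℝ) (hhmeas : Measurable h)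
    (hsymm : ∀ (σ : Equiv.Perm (Fin k)) (x : Fin k → ℝ), h (x ∘ σ) = h x)
    (Z : ℕ → Ω → ℝ)
    (hmeas : ∀ i, Measurable (Z i))
    (hiid : iIndepFun Z P)
    (hident : ∀ i j, IdentDistrib (Z i) (Z j) P P)
    (hL2 : MemLp (fun ω => h (fun j => Z (j : ℕ) ω)) 2 P)
    (ζ : ℕ → ℝ)
    (hζ : ∀ c, ζ c = cov P (fun ω => h (fun j => Z (j : ℕ) ω))
      (fun ω => h (fun j => if (j : ℕ) < c then Z (j : ℕ) ω else Z (k + (j : ℕ)) ω))) :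
    variance (fun ω =>
        (∑ A ∈ Finset.powersetCard k (Finset.univ : Finset (Fin N)),
          kernelOn h Z A ω) / (N.choose k : ℝ)) P =
      ∑ c ∈ Finset.Icc 1 k,
        ((k.choose c : ℝ) * ((N - k).choose (k - c) : ℝ) / (N.choose k : ℝ)) * ζ c :=
  stmt_4_general P N k h hhmeas hsymm Z hmeas hiid hident hL2 ζ hζ
end

section
/- Let Z_1,...,Z_N be i.i.d. ℝ^p-valued with mean 0, covariance Σ₀, and E‖Z‖⁴ < ∞. Consider the kernel h(Z_{s₁},...,Z_{s_k}) = tᵀ[ (1/(k(k−1))) (Σ_{i=1}^k Z_{s_i})(Σ_{i=1}^k Z_{s_i})ᵀ − (1/(k−1)) Σ₀ ] u for fixed vectors t, u ∈ ℝ^p. Then E[h] = 0 and Var(h) = O(1/k²) as k → ∞. -/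
/-!
Write `A i = ⟨t, Z i⟩`, `B i = ⟨u, Z i⟩`, `X = ∑_{i<k} A i`, `Y = ∑_{i<k} B i`. The kernel is
`(X Y - k tᵀΣ₀u) / (k (k - 1))`, and `E[X Y] = k tᵀΣ₀u` because only the diagonal terms `E[A i B i]`
survive, so it is centered. Its variance is at most `E[(X Y)²] / (k (k - 1))²`, and
`E[(X Y)²] ≤ (E X⁴ + E Y⁴) / 2`. For a sum of `k` i.i.d. centered variables,
`E X⁴ = k E A⁴ + 3 k (k - 1) (E A²)² ≤ 3 k² E A⁴` (by induction, since
`E (S + A)⁴ = E S⁴ + 6 E S² E A² + E A⁴` for independent centered `S` and `A`), which gives the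
bound `O(1/k²)`.
-/

open MeasureTheory ProbabilityTheory
open scoped Matrix

section

variable {Ω : Type*} [MeasurableSpace Ω] {P : Measure Ω}

lemma MeasureTheory.MemLp.integrable_pow_of_le [IsFiniteMeasure P] {X : Ω → ℝ} {m n : ℕ}
    (hX : MemLp X m P) (hnm : n ≤ m) : Integrable (fun ω => X ω ^ n) P :=
  ((hX.mono_exponent (by exact_mod_cast hnm)).integrable_norm_pow').mono'
    (hX.aestronglyMeasurable.pow n) (.of_forall fun ω => by simp)

lemma ProbabilityTheory.IdentDistrib.integral_pow_eq {Ω' : Type*} [MeasurableSpace Ω']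
    {Q : Measure Ω'} {X : Ω → ℝ} {Y : Ω' → ℝ} (h : IdentDistrib X Y P Q) (n : ℕ) :
    ∫ ω, X ω ^ n ∂P = ∫ ω, Y ω ^ n ∂Q :=
  (h.comp (measurable_id.pow_const n)).integral_eq

lemma sq_integral_sq_le_integral_pow_four [IsProbabilityMeasure P] {X : Ω → ℝ}
    (hX : MemLp X 4 P) : (∫ ω, X ω ^ 2 ∂P) ^ 2 ≤ ∫ ω, X ω ^ 4 ∂P := by
  have hX2 : MemLp (fun ω => X ω ^ 2) 2 P := by
    refine (memLp_two_iff_integrable_sq (hX.aestronglyMeasurable.pow 2)).mpr ?_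
    simpa only [Pi.pow_apply, ← pow_mul] using hX.integrable_pow_of_le (m := 4) (n := 4) le_rfl
  have hvar := variance_nonneg (fun ω => X ω ^ 2) P
  rw [variance_eq_sub hX2] at hvar
  simp only [Pi.pow_apply, ← pow_mul] at hvar
  linarith

lemma variance_mul_le [IsProbabilityMeasure P] {X Y : Ω → ℝ} (hX : AEStronglyMeasurable X P)
    (hY : AEStronglyMeasurable Y P) (hX4 : Integrable (fun ω => X ω ^ 4) P)
    (hY4 : Integrable (fun ω => Y ω ^ 4) P) :
    variance (fun ω => X ω * Y ω) P ≤ (∫ ω, X ω ^ 4 ∂P + ∫ ω, Y ω ^ 4 ∂P) / 2 := by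
  refine (variance_le_expectation_sq (hX.mul hY)).trans ?_
  rw [← integral_add hX4 hY4, ← integral_div]
  refine integral_mono_of_nonneg (.of_forall fun ω => ?_) ((hX4.add hY4).div_const 2)
    (.of_forall fun ω => ?_) <;> simp only [Pi.pow_apply, Pi.mul_apply, Pi.zero_apply]
  · positivity
  · nlinarith [sq_nonneg (X ω ^ 2 - Y ω ^ 2)]

namespace ProbabilityTheory.IndepFun

variable {X Y : Ω → ℝ}

lemma integral_pow_mul_pow (hXY : IndepFun X Y P) (hX : AEMeasurable X P)
    (hY : AEMeasurable Y P) (a b : ℕ) :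
    ∫ ω, X ω ^ a * Y ω ^ b ∂P = (∫ ω, X ω ^ a ∂P) * ∫ ω, Y ω ^ b ∂P :=
  hXY.integral_fun_comp_mul_comp (f := fun x => x ^ a) (g := fun y => y ^ b) hX hY
    (by fun_prop) (by fun_prop)

lemma integral_add_pow [IsFiniteMeasure P] (hXY : IndepFun X Y P) {n : ℕ} (hX : MemLp X n P)
    (hY : MemLp Y n P) :
    ∫ ω, (X ω + Y ω) ^ n ∂P
      = ∑ j ∈ Finset.range (n + 1), (∫ ω, X ω ^ j ∂P) * (∫ ω, Y ω ^ (n - j) ∂P) * n.choose j := by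
  have hint : ∀ j ∈ Finset.range (n + 1),
      Integrable (fun ω => X ω ^ j * Y ω ^ (n - j) * n.choose j) P := fun j hj =>
    ((hXY.comp (measurable_id.pow_const j) (measurable_id.pow_const (n - j))).integrable_mul
      (hX.integrable_pow_of_le (Finset.mem_range_succ_iff.mp hj))
      (hY.integrable_pow_of_le (Nat.sub_le n j))).mul_const _
  simp_rw [add_pow, integral_finsetSum _ hint, integral_mul_const,
    hXY.integral_pow_mul_pow hX.aemeasurable hY.aemeasurable]

variable [IsProbabilityMeasure P]

lemma integral_add_sq (hXY : IndepFun X Y P) (hX : MemLp X 2 P) (hY : MemLp Y 2 P)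
    (hY0 : ∫ ω, Y ω ∂P = 0) :
    ∫ ω, (X ω + Y ω) ^ 2 ∂P = ∫ ω, X ω ^ 2 ∂P + ∫ ω, Y ω ^ 2 ∂P := by
  rw [hXY.integral_add_pow (n := 2) (by exact_mod_cast hX) (by exact_mod_cast hY)]
  simp only [Finset.sum_range_succ, Finset.sum_range_zero, Nat.reduceAdd, Nat.reduceSub,
    Nat.choose, pow_zero, pow_one, integral_const, probReal_univ, smul_eq_mul, hY0]
  ring

lemma integral_add_pow_four (hXY : IndepFun X Y P) (hX : MemLp X 4 P) (hY : MemLp Y 4 P)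
    (hX0 : ∫ ω, X ω ∂P = 0) (hY0 : ∫ ω, Y ω ∂P = 0) :
    ∫ ω, (X ω + Y ω) ^ 4 ∂P
      = ∫ ω, X ω ^ 4 ∂P + 6 * (∫ ω, X ω ^ 2 ∂P) * (∫ ω, Y ω ^ 2 ∂P) + ∫ ω, Y ω ^ 4 ∂P := by
  rw [hXY.integral_add_pow (n := 4) (by exact_mod_cast hX) (by exact_mod_cast hY)]
  simp only [Finset.sum_range_succ, Finset.sum_range_zero, Nat.reduceAdd, Nat.reduceSub,
    Nat.choose, pow_zero, pow_one, integral_const, probReal_univ, smul_eq_mul, hX0, hY0]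
  ring

end ProbabilityTheory.IndepFun

section IID

variable [IsProbabilityMeasure P] {A : ℕ → Ω → ℝ} (hmeas : ∀ i, Measurable (A i))
  (hindep : iIndepFun A P) (hident : ∀ i, IdentDistrib (A i) (A 0) P P)
include hmeas hindep hident

lemma integral_sum_range_sq (hL2 : MemLp (A 0) 2 P) (hmean : ∫ ω, A 0 ω ∂P = 0) (k : ℕ) :
    ∫ ω, (∑ i ∈ Finset.range k, A i ω) ^ 2 ∂P = k * ∫ ω, A 0 ω ^ 2 ∂P := by
  induction k with
  | zero => simp
  | succ k ih =>
    have hindep_k := hindep.indepFun_finsetSum_of_notMem hmeas (Finset.notMem_range_self (n := k))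
    rw [Finset.sum_fn] at hindep_k
    simp only [Finset.sum_range_succ]
    rw [hindep_k.integral_add_sq (memLp_finsetSum _ fun i _ => (hident i).memLp_iff.mpr hL2)
      ((hident k).memLp_iff.mpr hL2) ((hident k).integral_eq.trans hmean), ih,
      (hident k).integral_pow_eq]
    push_cast
    ring

lemma integral_sum_range_pow_four (hL4 : MemLp (A 0) 4 P) (hmean : ∫ ω, A 0 ω ∂P = 0) (k : ℕ) :
    ∫ ω, (∑ i ∈ Finset.range k, A i ω) ^ 4 ∂P
      = k * ∫ ω, A 0 ω ^ 4 ∂P + 3 * k * (k - 1) * (∫ ω, A 0 ω ^ 2 ∂P) ^ 2 := by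
  have hL4' : ∀ i, MemLp (A i) 4 P := fun i => (hident i).memLp_iff.mpr hL4
  have hmean' : ∀ i, ∫ ω, A i ω ∂P = 0 := fun i => (hident i).integral_eq.trans hmean
  induction k with
  | zero => simp
  | succ k ih =>
    have hindep_k := hindep.indepFun_finsetSum_of_notMem hmeas (Finset.notMem_range_self (n := k))
    rw [Finset.sum_fn] at hindep_k
    have hsum0 : ∫ ω, ∑ i ∈ Finset.range k, A i ω ∂P = 0 := by
      rw [integral_finsetSum _ fun i _ => (hL4' i).integrable (by norm_num)]
      simp [hmean']
    simp only [Finset.sum_range_succ]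
    rw [hindep_k.integral_add_pow_four (memLp_finsetSum _ fun i _ => hL4' i) (hL4' k) hsum0
      (hmean' k), ih, integral_sum_range_sq hmeas hindep hident
      (hL4.mono_exponent (by norm_num)) hmean, (hident k).integral_pow_eq,
      (hident k).integral_pow_eq]
    push_cast
    ring

lemma integral_sum_range_pow_four_le (hL4 : MemLp (A 0) 4 P) (hmean : ∫ ω, A 0 ω ∂P = 0)
    (k : ℕ) : ∫ ω, (∑ i ∈ Finset.range k, A i ω) ^ 4 ∂P ≤ 3 * k ^ 2 * ∫ ω, A 0 ω ^ 4 ∂P := by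
  rw [integral_sum_range_pow_four hmeas hindep hident hL4 hmean]
  have hk : (0 : ℝ) ≤ 3 * k * (k - 1) := by
    rcases k with _ | k
    · simp
    · push_cast; ring_nf; positivity
  have hm4 : 0 ≤ ∫ ω, A 0 ω ^ 4 ∂P := integral_nonneg fun ω => by positivity
  calc _ ≤ k * ∫ ω, A 0 ω ^ 4 ∂P + 3 * k * (k - 1) * ∫ ω, A 0 ω ^ 4 ∂P := by
        gcongr
        exact sq_integral_sq_le_integral_pow_four hL4
    _ ≤ 3 * k ^ 2 * ∫ ω, A 0 ω ^ 4 ∂P := by nlinarith [k.cast_nonneg (α := ℝ)]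

end IID

lemma integral_sum_mul_sum_eq_sum_integral_mul {A B : ℕ → Ω → ℝ} (s : Finset ℕ)
    (hint : ∀ i j, Integrable (fun ω => A i ω * B j ω) P)
    (hcross : ∀ i j, i ≠ j → ∫ ω, A i ω * B j ω ∂P = 0) :
    ∫ ω, (∑ i ∈ s, A i ω) * (∑ j ∈ s, B j ω) ∂P = ∑ i ∈ s, ∫ ω, A i ω * B i ω ∂P := by
  simp only [Finset.sum_mul_sum]
  rw [integral_finsetSum _ fun i _ => integrable_finsetSum _ fun j _ => hint i j]
  refine Finset.sum_congr rfl fun i hi => ?_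
  rw [integral_finsetSum _ fun j _ => hint i j]
  exact Finset.sum_eq_single_of_mem i hi fun j _ hji => hcross i j hji.symm

section DotProduct

variable {ι : Type*} [Fintype ι]

lemma sum_sum_mul_sub_mul_mul (t u x y : ι → ℝ) (S : Matrix ι ι ℝ) (c d : ℝ) :
    ∑ a, ∑ b, t a * (c * (x a * y b) - d * S a b) * u b
      = c * ((t ⬝ᵥ x) * (u ⬝ᵥ y)) - d * (t ⬝ᵥ S *ᵥ u) := by
  simp only [dotProduct, Matrix.mulVec]
  rw [Finset.sum_mul_sum, Finset.mul_sum, Finset.mul_sum, ← Finset.sum_sub_distrib]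
  refine Finset.sum_congr rfl fun a _ => ?_
  rw [Finset.mul_sum, Finset.mul_sum, Finset.mul_sum, ← Finset.sum_sub_distrib]
  exact Finset.sum_congr rfl fun b _ => by ring

lemma sum_sum_mul_sum_mul_sum_sub_mul_mul (s : Finset ℕ) (t u : ι → ℝ) (x : ℕ → ι → ℝ)
    (S : Matrix ι ι ℝ) (c d : ℝ) :
    ∑ a, ∑ b, t a * (c * ((∑ i ∈ s, x i a) * (∑ i ∈ s, x i b)) - d * S a b) * u b
      = c * ((∑ i ∈ s, t ⬝ᵥ x i) * (∑ i ∈ s, u ⬝ᵥ x i)) - d * (t ⬝ᵥ S *ᵥ u) := by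
  simpa only [Finset.sum_apply, dotProduct_sum] using
    sum_sum_mul_sub_mul_mul t u (∑ i ∈ s, x i) (∑ i ∈ s, x i) S c d

lemma MeasureTheory.MemLp.const_dotProduct {Z : Ω → ι → ℝ} {p : ENNReal} (hZ : MemLp Z p P)
    (t : ι → ℝ) : MemLp (fun ω => t ⬝ᵥ Z ω) p P :=
  memLp_finsetSum _ fun a _ => (hZ.eval a).const_mul (t a)

lemma integral_const_dotProduct {Z : Ω → ι → ℝ} (hZ : Integrable Z P) (t : ι → ℝ) :
    ∫ ω, t ⬝ᵥ Z ω ∂P = t ⬝ᵥ fun a => ∫ ω, Z ω a ∂P := by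
  simp only [dotProduct]
  rw [integral_finsetSum _ fun a _ => (hZ.eval a).const_mul (t a)]
  simp only [integral_const_mul]

lemma integral_dotProduct_mul_dotProduct {Z : Ω → ι → ℝ} (hZ : MemLp Z 2 P)
    {S : Matrix ι ι ℝ} (hS : ∀ a b, ∫ ω, Z ω a * Z ω b ∂P = S a b) (t u : ι → ℝ) :
    ∫ ω, (t ⬝ᵥ Z ω) * (u ⬝ᵥ Z ω) ∂P = t ⬝ᵥ S *ᵥ u := by
  have hint : ∀ a b, Integrable (fun ω => t a * (Z ω a * Z ω b) * u b) P := fun a b =>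
    (((hZ.eval a).integrable_mul (hZ.eval b)).const_mul (t a)).mul_const (u b)
  have hexp : (fun ω => (t ⬝ᵥ Z ω) * (u ⬝ᵥ Z ω))
      = fun ω => ∑ a, ∑ b, t a * (Z ω a * Z ω b) * u b := by
    ext ω
    simp only [dotProduct, Finset.sum_mul_sum]
    exact Finset.sum_congr rfl fun a _ => Finset.sum_congr rfl fun b _ => by ring
  rw [hexp, integral_finsetSum _ fun a _ => integrable_finsetSum _ fun b _ => hint a b]
  simp only [dotProduct, Matrix.mulVec, Finset.mul_sum]
  refine Finset.sum_congr rfl fun a _ => ?_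
  rw [integral_finsetSum _ fun b _ => hint a b]
  refine Finset.sum_congr rfl fun b _ => ?_
  rw [integral_mul_const, integral_const_mul, hS]
  ring

lemma integral_dotProduct_mul_dotProduct_eq_zero {Z W : Ω → ι → ℝ} (hZW : IndepFun Z W P)
    (hZ : Integrable Z P) (hW : AEMeasurable W P) (hZ0 : ∀ a, ∫ ω, Z ω a ∂P = 0)
    (t u : ι → ℝ) : ∫ ω, (t ⬝ᵥ Z ω) * (u ⬝ᵥ W ω) ∂P = 0 := by
  rw [hZW.integral_fun_comp_mul_comp (f := fun z => t ⬝ᵥ z) (g := fun w => u ⬝ᵥ w)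
    hZ.aemeasurable hW (by fun_prop) (by fun_prop), integral_const_dotProduct hZ]
  simp [hZ0]

end DotProduct

lemma inv_mul_sub_one_sq_mul_le {k M : ℝ} (hk : 2 ≤ k) (hM : 0 ≤ M) :
    ((k * (k - 1))⁻¹) ^ 2 * (k ^ 2 * M) ≤ 4 * M / k ^ 2 := by
  have hk1 : 0 < k - 1 := by linarith
  have hsimp : ((k * (k - 1))⁻¹) ^ 2 * (k ^ 2 * M) = M / (k - 1) ^ 2 := by
    field_simp
  rw [hsimp, div_le_div_iff₀ (by positivity) (by positivity)]
  nlinarith [mul_nonneg hM (by linarith : 0 ≤ k - 2), mul_nonneg hM (by linarith : 0 ≤ 3 * k - 2)]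

section RandomVectors

variable [IsProbabilityMeasure P] {ι : Type*} [Fintype ι] {Z : ℕ → Ω → ι → ℝ}

lemma integral_sum_range_dotProduct_pow_four_le (hmeas : ∀ i, Measurable (Z i))
    (hiid : iIndepFun Z P) (hident : ∀ i, IdentDistrib (Z i) (Z 0) P P) (hL4 : MemLp (Z 0) 4 P)
    (hmean : ∀ a, ∫ ω, Z 0 ω a ∂P = 0) (t : ι → ℝ) (k : ℕ) :
    ∫ ω, (∑ i ∈ Finset.range k, t ⬝ᵥ Z i ω) ^ 4 ∂P ≤ 3 * k ^ 2 * ∫ ω, (t ⬝ᵥ Z 0 ω) ^ 4 ∂P := by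
  have hφ : Measurable fun z : ι → ℝ => t ⬝ᵥ z := by fun_prop
  refine integral_sum_range_pow_four_le (A := fun i ω => t ⬝ᵥ Z i ω) (fun i => hφ.comp (hmeas i))
    (hiid.comp (fun _ => _) fun _ => hφ) (fun i => (hident i).comp hφ) ?_ ?_ k
  · exact hL4.const_dotProduct t
  · simp [integral_const_dotProduct (hL4.integrable (by norm_num)), hmean]

lemma integral_sum_dotProduct_mul_sum_dotProduct (hmeas : ∀ i, Measurable (Z i))
    (hiid : iIndepFun Z P) (hL2 : ∀ i, MemLp (Z i) 2 P) (hmean : ∀ i a, ∫ ω, Z i ω a ∂P = 0)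
    {S : Matrix ι ι ℝ} (hcov : ∀ i a b, ∫ ω, Z i ω a * Z i ω b ∂P = S a b) (t u : ι → ℝ)
    (s : Finset ℕ) :
    ∫ ω, (∑ i ∈ s, t ⬝ᵥ Z i ω) * (∑ i ∈ s, u ⬝ᵥ Z i ω) ∂P = s.card * (t ⬝ᵥ S *ᵥ u) := by
  rw [integral_sum_mul_sum_eq_sum_integral_mul s
    (fun i j => ((hL2 i).const_dotProduct t).integrable_mul ((hL2 j).const_dotProduct u))
    fun i j hij => integral_dotProduct_mul_dotProduct_eq_zero (hiid.indepFun hij)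
      ((hL2 i).integrable (by norm_num)) (hmeas j).aemeasurable (hmean i) t u]
  simp [integral_dotProduct_mul_dotProduct (hL2 _) (hcov _)]

noncomputable def biasCorrectedKernel (Z : ℕ → Ω → ι → ℝ) (S : Matrix ι ι ℝ) (t u : ι → ℝ)
    (k : ℕ) (ω : Ω) : ℝ :=
  ((k : ℝ) * ((k : ℝ) - 1))⁻¹ * ((∑ i ∈ Finset.range k, t ⬝ᵥ Z i ω) * ∑ i ∈ Finset.range k, u ⬝ᵥ Z i ω)
    - ((k : ℝ) - 1)⁻¹ * (t ⬝ᵥ S *ᵥ u)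

lemma integral_biasCorrectedKernel (hmeas : ∀ i, Measurable (Z i)) (hiid : iIndepFun Z P)
    (hL2 : ∀ i, MemLp (Z i) 2 P) (hmean : ∀ i a, ∫ ω, Z i ω a ∂P = 0) {S : Matrix ι ι ℝ}
    (hcov : ∀ i a b, ∫ ω, Z i ω a * Z i ω b ∂P = S a b) (t u : ι → ℝ) {k : ℕ} (hk : 2 ≤ k) :
    ∫ ω, biasCorrectedKernel Z S t u k ω ∂P = 0 := by
  have hk0 : (k : ℝ) ≠ 0 := by positivity
  have hk1 : (k : ℝ) - 1 ≠ 0 := by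
    have : (2 : ℝ) ≤ k := by exact_mod_cast hk
    linarith
  have hsum : ∀ v : ι → ℝ, MemLp (fun ω => ∑ i ∈ Finset.range k, v ⬝ᵥ Z i ω) 2 P := fun v =>
    memLp_finsetSum _ fun i _ => (hL2 i).const_dotProduct v
  have hXY : Integrable (fun ω => (∑ i ∈ Finset.range k, t ⬝ᵥ Z i ω)
      * ∑ i ∈ Finset.range k, u ⬝ᵥ Z i ω) P := (hsum t).integrable_mul (hsum u)
  unfold biasCorrectedKernel
  rw [integral_sub (hXY.const_mul _) (integrable_const _), integral_const_mul,
    integral_sum_dotProduct_mul_sum_dotProduct hmeas hiid hL2 hmean hcov, integral_const]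
  simp only [Finset.card_range, probReal_univ, one_smul]
  field_simp
  ring

lemma variance_biasCorrectedKernel_le (hmeas : ∀ i, Measurable (Z i)) (hiid : iIndepFun Z P)
    (hident : ∀ i, IdentDistrib (Z i) (Z 0) P P) (hL4 : MemLp (Z 0) 4 P)
    (hmean : ∀ a, ∫ ω, Z 0 ω a ∂P = 0) (S : Matrix ι ι ℝ) (t u : ι → ℝ) {k : ℕ} (hk : 2 ≤ k) :
    variance (biasCorrectedKernel Z S t u k) P
      ≤ 6 * (∫ ω, (t ⬝ᵥ Z 0 ω) ^ 4 ∂P + ∫ ω, (u ⬝ᵥ Z 0 ω) ^ 4 ∂P) / k ^ 2 := by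
  have hsum : ∀ v : ι → ℝ, MemLp (fun ω => ∑ i ∈ Finset.range k, v ⬝ᵥ Z i ω) 4 P := fun v =>
    memLp_finsetSum _ fun i _ => ((hident i).memLp_iff.mpr hL4).const_dotProduct v
  have hfourth := integral_sum_range_dotProduct_pow_four_le hmeas hiid hident hL4 hmean
  have hm4 : ∀ v : ι → ℝ, 0 ≤ ∫ ω, (v ⬝ᵥ Z 0 ω) ^ 4 ∂P := fun v =>
    integral_nonneg fun ω => by positivity
  unfold biasCorrectedKernel
  rw [variance_sub_const (by fun_prop), variance_const_mul]
  calc _ ≤ ((k * (k - 1 : ℝ))⁻¹) ^ 2 * ((∫ ω, (∑ i ∈ Finset.range k, t ⬝ᵥ Z i ω) ^ 4 ∂P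
        + ∫ ω, (∑ i ∈ Finset.range k, u ⬝ᵥ Z i ω) ^ 4 ∂P) / 2) := by
        gcongr
        exact variance_mul_le (hsum t).aestronglyMeasurable (hsum u).aestronglyMeasurable
          ((hsum t).integrable_pow_of_le le_rfl) ((hsum u).integrable_pow_of_le le_rfl)
    _ ≤ ((k * (k - 1 : ℝ))⁻¹) ^ 2 * (k ^ 2 * (3 * (∫ ω, (t ⬝ᵥ Z 0 ω) ^ 4 ∂P
        + ∫ ω, (u ⬝ᵥ Z 0 ω) ^ 4 ∂P) / 2)) := by
        gcongr
        linarith [hfourth t k, hfourth u k]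
    _ ≤ 4 * (3 * (∫ ω, (t ⬝ᵥ Z 0 ω) ^ 4 ∂P + ∫ ω, (u ⬝ᵥ Z 0 ω) ^ 4 ∂P) / 2) / k ^ 2 :=
        inv_mul_sub_one_sq_mul_le (by exact_mod_cast hk) (by linarith [hm4 t, hm4 u])
    _ = _ := by ring

end RandomVectors

end

/-- For i.i.d. centered data in `ℝ^p` with covariance `Σ₀` and finite fourth
moments, the kernel
`h_k = tᵀ[ (1/(k(k−1)))(∑_{i<k} Z_i)(∑_{i<k} Z_i)ᵀ − (1/(k−1))Σ₀ ]u`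
satisfies `E[h_k] = 0` for every `k ≥ 2`, and there is a constant `C` (independent of `k`)
with `Var(h_k) ≤ C/k²` for all `k ≥ 2`. -/
theorem stmt_16 {Ω : Type*} [MeasurableSpace Ω] (P : Measure Ω) [IsProbabilityMeasure P]
    (p : ℕ)
    (Z : ℕ → Ω → (Fin p → ℝ))
    (hmeas : ∀ i, Measurable (Z i))
    (hiid : iIndepFun Z P)
    (hident : ∀ i j, IdentDistrib (Z i) (Z j) P P)
    (hL4 : ∀ i, MemLp (Z i) 4 P)
    (hmean : ∀ i, ∀ a : Fin p, ∫ ω, Z i ω a ∂P = 0)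
    (S0 : Matrix (Fin p) (Fin p) ℝ)
    (hcov : ∀ i, ∀ a b : Fin p, ∫ ω, Z i ω a * Z i ω b ∂P = S0 a b)
    (t u : Fin p → ℝ) :
    (∀ k : ℕ, 2 ≤ k →
      (∫ ω, ∑ a : Fin p, ∑ b : Fin p, t a *
        (((k : ℝ) * ((k : ℝ) - 1))⁻¹ *
            ((∑ i ∈ Finset.range k, Z i ω a) * (∑ i ∈ Finset.range k, Z i ω b)) -
          ((k : ℝ) - 1)⁻¹ * S0 a b) * u b ∂P) = 0) ∧
    ∃ C : ℝ, ∀ k : ℕ, 2 ≤ k →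
      variance (fun ω => ∑ a : Fin p, ∑ b : Fin p, t a *
        (((k : ℝ) * ((k : ℝ) - 1))⁻¹ *
            ((∑ i ∈ Finset.range k, Z i ω a) * (∑ i ∈ Finset.range k, Z i ω b)) -
          ((k : ℝ) - 1)⁻¹ * S0 a b) * u b) P ≤ C / (k : ℝ) ^ 2 := by
  simp only [sum_sum_mul_sum_mul_sum_sub_mul_mul]
  have hL2 : ∀ i, MemLp (Z i) 2 P := fun i => (hL4 i).mono_exponent (by norm_num)
  exact ⟨fun k hk => integral_biasCorrectedKernel hmeas hiid hL2 hmean hcov t u hk,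
    _, fun k hk => variance_biasCorrectedKernel_le hmeas hiid (fun i => hident i 0) (hL4 0)
      (hmean 0) S0 t u hk⟩
end
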